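/- arXiv:2307.01992 — 3 statements merged into one kernel-verified Lean document; each statement's English description precedes it below -/
import Mathlib

section
/- For every real ξ, the characteristic polynomial of the 4×4 complex matrix A(ξ) with rows (0, −iξ, 0, 0), (−iξ, −1, 0, 1), (0, 0, 0, −iξ), (0, 1, −iξ, −1−ξ²) equals λ⁴ + (ξ² + 2)λ³ + 3ξ²λ² + ξ²(ξ² + 2)λ + ξ⁴. -/
open Polynomial Complex

/-! With `z = -iξ` one has `-1 - ξ² = -1 + z²`, so `A(ξ)` is a polynomial matrix in `z` over any
commutative ring; its characteristic polynomial follows from Laplace expansion along the first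
row, and substituting `z² = -ξ²` gives the claim. -/

theorem Matrix.det_fin_four_of {R : Type*} [CommRing R] (a b c d e f g h i j k l m n o p : R) :
    Matrix.det !![a, b, c, d; e, f, g, h; i, j, k, l; m, n, o, p] =
      a * Matrix.det !![f, g, h; j, k, l; n, o, p] - b * Matrix.det !![e, g, h; i, k, l; m, o, p]
        + c * Matrix.det !![e, f, h; i, j, l; m, n, p]
        - d * Matrix.det !![e, f, g; i, j, k; m, n, o] := by
  simp only [Matrix.det_succ_row_zero (n := 3), Fin.sum_univ_four]
  simp [Matrix.det_fin_three, Fin.succAbove]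
  ring

theorem charpoly_twoPhaseSymbol {R : Type*} [CommRing R] (z : R) :
    (!![0, z, 0, 0; z, -1, 0, 1; 0, 0, 0, z; 0, 1, z, -1 + z ^ 2] :
        Matrix (Fin 4) (Fin 4) R).charpoly =
      X ^ 4 + C (2 - z ^ 2) * X ^ 3 - C (3 * z ^ 2) * X ^ 2 - C (z ^ 2 * (2 - z ^ 2)) * X
        + C (z ^ 4) := by
  have hcm : (!![0, z, 0, 0; z, -1, 0, 1; 0, 0, 0, z; 0, 1, z, -1 + z ^ 2] :
        Matrix (Fin 4) (Fin 4) R).charmatrix =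
      !![X, -C z, 0, 0; -C z, X + 1, 0, -1; 0, 0, X, -C z; 0, -1, -C z, X - C (-1 + z ^ 2)] := by
    ext i j
    fin_cases i <;> fin_cases j <;> simp
  rw [Matrix.charpoly, hcm, Matrix.det_fin_four_of]
  simp [Matrix.det_fin_three, map_ofNat C]
  ring

/-- For every real `ξ`, the characteristic polynomial of the Fourier symbol `A(ξ)` of the
linearized 1D two-phase Euler–Navier–Stokes system equals
`λ⁴ + (ξ² + 2)λ³ + 3ξ²λ² + ξ²(ξ² + 2)λ + ξ⁴`. -/
theorem stmt4 (ξ : ℝ) :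
    let A : Matrix (Fin 4) (Fin 4) ℂ :=
      !![0, -I * (ξ : ℂ), 0, 0;
         -I * (ξ : ℂ), -1, 0, 1;
         0, 0, 0, -I * (ξ : ℂ);
         0, 1, -I * (ξ : ℂ), -1 - (ξ : ℂ) ^ 2]
    A.charpoly =
      X ^ 4 + C ((ξ : ℂ) ^ 2 + 2) * X ^ 3 + C (3 * (ξ : ℂ) ^ 2) * X ^ 2
        + C ((ξ : ℂ) ^ 2 * ((ξ : ℂ) ^ 2 + 2)) * X + C ((ξ : ℂ) ^ 4) := by
  intro A
  have hsq : (-I * ξ) ^ 2 = -(ξ : ℂ) ^ 2 := by rw [mul_pow, neg_sq, I_sq]; ring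
  have hA : A = !![0, -I * ξ, 0, 0; -I * ξ, -1, 0, 1; 0, 0, 0, -I * ξ;
      0, 1, -I * ξ, -1 + (-I * ξ) ^ 2] := by
    rw [hsq, ← sub_eq_add_neg]
  rw [hA, charpoly_twoPhaseSymbol, show (-I * ξ) ^ 4 = ((-I * ξ) ^ 2) ^ 2 by ring, hsq]
  simp only [map_neg, map_mul, map_add, map_sub, map_pow, map_ofNat]
  ring
end

section
/- (Duhamel decay for damped ODE) Let c > 0 and let y: [0, ∞) → ℝ be continuous, nonnegative, and satisfy y(t) ≤ e^{−ct} y(0) + ∫_0^t e^{−c(t−τ)} (A (1+τ)^{−3/4} + ε (1+τ)^{−1/2} y(τ)) dτ for all t ≥ 0, where A ≥ 0 and ε ≥ 0. Then there exist constants C > 0 and ε₀ > 0 depending only on c such that if ε ≤ ε₀, then y(t) ≤ C (y(0) + A) (1+t)^{−3/4} for all t ≥ 0. -/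
/-!
Let `w s = (1 + s) ^ (-3/4)` and let `M` be the maximum of `y / w` on `[0, t]`. The damped
kernel maps `w` to `O(w)`: split `e^{-cu} = e^{-cu/2} e^{-cu/2}`, let one factor absorb the loss
in `(1 + τ) ^ (-p) ≤ (1 + u) ^ p (1 + s) ^ (-p)` (`u = s - τ`), and integrate the other; this
gives the constant `K = 2 / (c * min 1 (c / 2))`. Hence
`y ≤ M w` turns the Duhamel inequality into `y ≤ (y 0 / min 1 c + K (A + ε M)) w`; at the
maximiser this reads `M ≤ y 0 / min 1 c + K A + K ε M`, and `K ε ≤ 1/2` absorbs the last term.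
-/

open Real Set intervalIntegral

lemma continuousOn_one_add_rpow (p : ℝ) : ContinuousOn (fun τ : ℝ => (1 + τ) ^ p) (Ici 0) :=
  fun τ hτ => ((continuousAt_const.add continuousAt_id).rpow_const
    (Or.inl (show (1 : ℝ) + τ ≠ 0 by linarith [mem_Ici.1 hτ]))).continuousWithinAt

lemma integral_exp_neg_mul_sub_le {c : ℝ} (hc : 0 < c) (s : ℝ) :
    ∫ τ in (0 : ℝ)..s, exp (-c * (s - τ)) ≤ 1 / c := by
  have h : ∫ τ in (0 : ℝ)..s, exp (-c * (s - τ)) = (1 - exp (-c * s)) / c := by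
    simp_rw [show ∀ τ, -c * (s - τ) = c * τ - c * s by intro; ring]
    rw [integral_comp_mul_sub (fun x => exp x) hc.ne', integral_exp]
    simp only [sub_self, exp_zero, mul_zero, zero_sub, smul_eq_mul, neg_mul]
    field_simp
  rw [h]
  gcongr
  linarith [exp_pos (-c * s)]

lemma exp_neg_mul_le_one_add_rpow_neg_div {c p t : ℝ} (hc : 0 < c) (hp : p ≤ 1) (ht : 0 ≤ t) :
    exp (-c * t) ≤ (1 + t) ^ (-p) / min 1 c := by
  have hm : 0 < min 1 c := lt_min one_pos hc
  have hpow : (1 + t) ^ p ≤ 1 + t := by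
    simpa using rpow_le_rpow_of_exponent_le (by linarith : 1 ≤ 1 + t) hp
  have hlin : min 1 c * (1 + t) ≤ exp (c * t) := by
    nlinarith [add_one_le_exp (c * t), min_le_left 1 c,
      mul_le_mul_of_nonneg_right (min_le_right 1 c) ht]
  calc exp (-c * t) = (exp (c * t))⁻¹ := by rw [neg_mul, exp_neg]
    _ ≤ (min 1 c * (1 + t) ^ p)⁻¹ :=
        inv_anti₀ (mul_pos hm (by positivity)) ((mul_le_mul_of_nonneg_left hpow hm.le).trans hlin)
    _ = (1 + t) ^ (-p) / min 1 c := by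
        rw [rpow_neg (by linarith), mul_inv, div_eq_mul_inv, mul_comm]

lemma one_add_rpow_neg_mul_le {p τ u : ℝ} (hp : 0 ≤ p) (hτ : 0 ≤ τ) (hu : 0 ≤ u) :
    (1 + τ) ^ (-p) * (1 + u) ^ (-p) ≤ (1 + (τ + u)) ^ (-p) := by
  rw [← mul_rpow (by linarith) (by linarith)]
  exact rpow_le_rpow_of_nonpos (by linarith) (by nlinarith) (by linarith)

lemma integral_exp_neg_mul_sub_mul_rpow_neg_le {c p s : ℝ} (hc : 0 < c) (hp0 : 0 ≤ p)
    (hp1 : p ≤ 1) (hs : 0 ≤ s) :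
    ∫ τ in (0 : ℝ)..s, exp (-c * (s - τ)) * (1 + τ) ^ (-p) ≤
      2 / (c * min 1 (c / 2)) * (1 + s) ^ (-p) := by
  set m := min 1 (c / 2)
  have hm : 0 < m := lt_min one_pos (half_pos hc)
  have hcont : ContinuousOn (fun τ => exp (-c * (s - τ)) * (1 + τ) ^ (-p)) (Icc 0 s) :=
    (by fun_prop : Continuous fun τ => exp (-c * (s - τ))).continuousOn.mul
      ((continuousOn_one_add_rpow _).mono Icc_subset_Ici_self)
  have hpt : ∀ τ ∈ Icc 0 s, exp (-c * (s - τ)) * (1 + τ) ^ (-p) ≤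
      (1 + s) ^ (-p) / m * exp (-(c / 2) * (s - τ)) := by
    intro τ hτ
    have hdecay := exp_neg_mul_le_one_add_rpow_neg_div (half_pos hc) hp1 (sub_nonneg.2 hτ.2)
    have hsplit := one_add_rpow_neg_mul_le hp0 hτ.1 (sub_nonneg.2 hτ.2)
    rw [add_sub_cancel] at hsplit
    calc exp (-c * (s - τ)) * (1 + τ) ^ (-p)
        = exp (-(c / 2) * (s - τ)) * (1 + τ) ^ (-p) * exp (-(c / 2) * (s - τ)) := by
          rw [mul_right_comm, ← exp_add]; ring_nf
      _ ≤ (1 + (s - τ)) ^ (-p) / m * (1 + τ) ^ (-p) * exp (-(c / 2) * (s - τ)) := by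
          gcongr
          exact rpow_nonneg (by linarith [hτ.1]) _
      _ ≤ (1 + s) ^ (-p) / m * exp (-(c / 2) * (s - τ)) := by
          rw [div_mul_eq_mul_div, mul_comm ((1 + (s - τ)) ^ (-p))]
          gcongr
  calc _ ≤ ∫ τ in (0 : ℝ)..s, (1 + s) ^ (-p) / m * exp (-(c / 2) * (s - τ)) :=
        integral_mono_on hs (hcont.intervalIntegrable_of_Icc hs)
          (Continuous.intervalIntegrable (by fun_prop) _ _) hpt
    _ = (1 + s) ^ (-p) / m * ∫ τ in (0 : ℝ)..s, exp (-(c / 2) * (s - τ)) :=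
        integral_const_mul _ _
    _ ≤ (1 + s) ^ (-p) / m * (1 / (c / 2)) := by
        gcongr
        exact integral_exp_neg_mul_sub_le (half_pos hc) s
    _ = 2 / (c * m) * (1 + s) ^ (-p) := by field_simp

lemma integral_exp_neg_mul_sub_mul_le {c p s D : ℝ} {f : ℝ → ℝ} (hc : 0 < c) (hp0 : 0 ≤ p)
    (hp1 : p ≤ 1) (hs : 0 ≤ s) (hD : 0 ≤ D) (hf : ContinuousOn f (Icc 0 s))
    (hfD : ∀ τ ∈ Icc 0 s, f τ ≤ D * (1 + τ) ^ (-p)) :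
    ∫ τ in (0 : ℝ)..s, exp (-c * (s - τ)) * f τ ≤
      D * (2 / (c * min 1 (c / 2)) * (1 + s) ^ (-p)) := by
  have hIcc : Icc 0 s ⊆ Ici 0 := Icc_subset_Ici_self
  have hexp : Continuous fun τ => exp (-c * (s - τ)) := by fun_prop
  calc _ ≤ ∫ τ in (0 : ℝ)..s, D * (exp (-c * (s - τ)) * (1 + τ) ^ (-p)) := by
        refine integral_mono_on hs ?_ ?_ fun τ hτ => ?_
        · exact (hexp.continuousOn.mul hf).intervalIntegrable_of_Icc hs
        · exact (continuousOn_const.mul (hexp.continuousOn.mul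
            ((continuousOn_one_add_rpow _).mono hIcc))).intervalIntegrable_of_Icc hs
        · rw [mul_left_comm]
          exact mul_le_mul_of_nonneg_left (hfD τ hτ) (exp_pos _).le
    _ = D * ∫ τ in (0 : ℝ)..s, exp (-c * (s - τ)) * (1 + τ) ^ (-p) := integral_const_mul _ _
    _ ≤ _ := by
        gcongr
        exact integral_exp_neg_mul_sub_mul_rpow_neg_le hc hp0 hp1 hs

lemma le_two_mul_mul_of_le_add_mul_mul {y w : ℝ → ℝ} {a b B θ : ℝ}
    (hcont : ContinuousOn (fun s => y s / w s) (Icc a b)) (hw : ∀ s ∈ Icc a b, 0 < w s)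
    (hy : ∀ s ∈ Icc a b, 0 ≤ y s) (hθ : θ ≤ 1 / 2)
    (h : ∀ s ∈ Icc a b, ∀ M, (∀ τ ∈ Icc a b, y τ ≤ M * w τ) → y s ≤ (B + θ * M) * w s) :
    ∀ s ∈ Icc a b, y s ≤ 2 * B * w s := by
  intro s hs
  obtain ⟨s₀, hs₀, hmax⟩ := isCompact_Icc.exists_isMaxOn ⟨s, hs⟩ hcont
  set M := y s₀ / w s₀
  have hyM : ∀ τ ∈ Icc a b, y τ ≤ M * w τ := fun τ hτ => (div_le_iff₀ (hw τ hτ)).1 (hmax hτ)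
  have hM : M ≤ B + θ * M := (div_le_iff₀ (hw s₀ hs₀)).2 (h s₀ hs₀ M hyM)
  have hM0 : 0 ≤ M := div_nonneg (hy s₀ hs₀) (hw s₀ hs₀).le
  calc y s ≤ M * w s := hyM s hs
    _ ≤ 2 * B * w s := by
        gcongr
        · exact (hw s hs).le
        · nlinarith

lemma le_mul_rpow_neg_of_duhamel {c p q A ε M s : ℝ} {y : ℝ → ℝ} (hc : 0 < c)
    (hp0 : 0 ≤ p) (hp1 : p ≤ 1) (hq : 0 ≤ q) (hA : 0 ≤ A) (hε : 0 ≤ ε) (hs : 0 ≤ s)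
    (hy : ContinuousOn y (Icc 0 s)) (hy0 : ∀ τ ∈ Icc 0 s, 0 ≤ y τ)
    (hyM : ∀ τ ∈ Icc 0 s, y τ ≤ M * (1 + τ) ^ (-p))
    (hys : y s ≤ exp (-c * s) * y 0 + ∫ τ in (0 : ℝ)..s, exp (-c * (s - τ)) *
      (A * (1 + τ) ^ (-p) + ε * (1 + τ) ^ (-q) * y τ)) :
    y s ≤ (y 0 / min 1 c + 2 / (c * min 1 (c / 2)) * (A + ε * M)) * (1 + s) ^ (-p) := by
  have hIcc : Icc 0 s ⊆ Ici 0 := Icc_subset_Ici_self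
  have h0 : (0 : ℝ) ∈ Icc 0 s := ⟨le_rfl, hs⟩
  have hM : 0 ≤ M := by simpa using (hy0 0 h0).trans (hyM 0 h0)
  have hsource : ∀ τ ∈ Icc 0 s,
      A * (1 + τ) ^ (-p) + ε * (1 + τ) ^ (-q) * y τ ≤ (A + ε * M) * (1 + τ) ^ (-p) := by
    intro τ hτ
    have hq1 : (1 + τ) ^ (-q) ≤ 1 :=
      rpow_le_one_of_one_le_of_nonpos (by linarith [hτ.1]) (by linarith)
    nlinarith [mul_le_mul_of_nonneg_left (hyM τ hτ) hε,
      mul_le_mul_of_nonneg_right hq1 (mul_nonneg hε (hy0 τ hτ))]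
  have hcont : ContinuousOn (fun τ => A * (1 + τ) ^ (-p) + ε * (1 + τ) ^ (-q) * y τ) (Icc 0 s) :=
    (continuousOn_const.mul ((continuousOn_one_add_rpow _).mono hIcc)).add
      ((continuousOn_const.mul ((continuousOn_one_add_rpow _).mono hIcc)).mul hy)
  calc y s ≤ _ := hys
    _ ≤ (1 + s) ^ (-p) / min 1 c * y 0 +
        (A + ε * M) * (2 / (c * min 1 (c / 2)) * (1 + s) ^ (-p)) :=
      add_le_add
        (mul_le_mul_of_nonneg_right (exp_neg_mul_le_one_add_rpow_neg_div hc hp1 hs) (hy0 0 h0))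
        (integral_exp_neg_mul_sub_mul_le hc hp0 hp1 hs (by positivity) hcont hsource)
    _ = _ := by ring

/-- Duhamel decay for a damped ODE inequality: if `y ≥ 0` is continuous on `[0,∞)` and
`y(t) ≤ e^{−ct} y(0) + ∫_0^t e^{−c(t−τ)} (A(1+τ)^{−3/4} + ε(1+τ)^{−1/2} y(τ)) dτ`,
then for `ε` small (depending only on `c`) one has
`y(t) ≤ C (y(0) + A) (1+t)^{−3/4}`. -/
theorem stmt12 (c : ℝ) (hc : 0 < c) :
    ∃ C : ℝ, 0 < C ∧ ∃ ε₀ : ℝ, 0 < ε₀ ∧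
      ∀ (y : ℝ → ℝ) (A ε : ℝ),
        ContinuousOn y (Set.Ici 0) →
        (∀ t, 0 ≤ t → 0 ≤ y t) →
        0 ≤ A → 0 ≤ ε →
        (∀ t, 0 ≤ t →
          y t ≤ Real.exp (-c * t) * y 0 +
            ∫ τ in (0 : ℝ)..t, Real.exp (-c * (t - τ)) *
              (A * (1 + τ) ^ (-(3 / 4 : ℝ)) + ε * (1 + τ) ^ (-(1 / 2 : ℝ)) * y τ)) →
        ε ≤ ε₀ →
        ∀ t, 0 ≤ t → y t ≤ C * (y 0 + A) * (1 + t) ^ (-(3 / 4 : ℝ)) := by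
  set K := 2 / (c * min 1 (c / 2))
  have hm : 0 < min 1 c := lt_min one_pos hc
  have hK : 0 < K := div_pos two_pos (mul_pos hc (lt_min one_pos (half_pos hc)))
  refine ⟨2 * (1 / min 1 c + K), by positivity, 1 / (2 * K), by positivity, ?_⟩
  intro y A ε hy hy0 hA hε hineq hεε₀ t ht
  have hKε : K * ε ≤ 1 / 2 := by
    calc K * ε ≤ K * (1 / (2 * K)) := by gcongr
      _ = 1 / 2 := by field_simp
  have hw : ∀ s ∈ Icc 0 t, 0 < (1 + s) ^ (-(3 / 4 : ℝ)) :=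
    fun s hs => rpow_pos_of_pos (by linarith [hs.1]) _
  have hIcc : Icc 0 t ⊆ Ici 0 := Icc_subset_Ici_self
  have hbound := le_two_mul_mul_of_le_add_mul_mul (B := y 0 / min 1 c + K * A) (θ := K * ε)
    ((hy.mono hIcc).div ((continuousOn_one_add_rpow _).mono hIcc) fun s hs => (hw s hs).ne')
    hw (fun s hs => hy0 s hs.1) hKε (fun s hs M hM => ?_) t ⟨ht, le_rfl⟩
  · have hB : y 0 / min 1 c + K * A ≤ (1 / min 1 c + K) * (y 0 + A) := by
      rw [← sub_nonneg, show (1 / min 1 c + K) * (y 0 + A) - (y 0 / min 1 c + K * A) =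
        A / min 1 c + K * y 0 by ring]
      exact add_nonneg (div_nonneg hA hm.le) (mul_nonneg hK.le (hy0 0 le_rfl))
    calc y t ≤ 2 * (y 0 / min 1 c + K * A) * (1 + t) ^ (-(3 / 4 : ℝ)) := hbound
      _ ≤ 2 * (1 / min 1 c + K) * (y 0 + A) * (1 + t) ^ (-(3 / 4 : ℝ)) := by
        rw [mul_assoc 2 (1 / min 1 c + K)]
        gcongr
  · have hIcc_s : Icc 0 s ⊆ Icc 0 t := Icc_subset_Icc_right hs.2
    refine (le_mul_rpow_neg_of_duhamel hc (by norm_num) (by norm_num) (by norm_num) hA hε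
      hs.1 (hy.mono (hIcc_s.trans hIcc)) (fun τ hτ => hy0 τ hτ.1)
      (fun τ hτ => hM τ (hIcc_s hτ)) (hineq s hs.1)).trans_eq ?_
    ring
end

section
/- For real numbers r₁ with 0 < r₁ sufficiently small, every root λ of the quartic λ⁴ + (ξ² + 2)λ³ + 3ξ²λ² + ξ²(ξ² + 2)λ + ξ⁴ = 0 with |ξ| ≤ r₁ and λ in a neighborhood of −2 satisfies Re λ ≤ −1. More precisely: there exist r₁ > 0 and a continuous branch λ₄(ξ) of roots with λ₄(0) = −2 such that Re λ₄(ξ) ≤ −1 for all |ξ| ≤ r₁. -/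
open Complex

noncomputable def aux15a (ξ : ℝ) : ℝ := (ξ^2 + 2 + Real.sqrt (ξ^4 + 4)) / 2

noncomputable def aux15L (ξ : ℝ) : ℝ :=
  (-(aux15a ξ) - Real.sqrt ((aux15a ξ)^2 - 4*ξ^2)) / 2

/-- Spectral gap of the non-degenerate eigenvalue branch: there exist `r₁ > 0` and a
continuous branch `λ₄(ξ)` of roots of the characteristic quartic with `λ₄(0) = −2`
such that `Re λ₄(ξ) ≤ −1` for all `|ξ| ≤ r₁`. -/
theorem stmt15 :
    ∃ r₁ : ℝ, 0 < r₁ ∧ ∃ lam : ℝ → ℂ, Continuous lam ∧ lam 0 = -2 ∧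
      ∀ ξ : ℝ, |ξ| ≤ r₁ →
        ((lam ξ) ^ 4 + ((ξ : ℂ) ^ 2 + 2) * (lam ξ) ^ 3 + 3 * (ξ : ℂ) ^ 2 * (lam ξ) ^ 2
          + (ξ : ℂ) ^ 2 * ((ξ : ℂ) ^ 2 + 2) * (lam ξ) + (ξ : ℂ) ^ 4 = 0) ∧
        (lam ξ).re ≤ -1 := by
  refine ⟨1, one_pos, fun ξ => ((aux15L ξ : ℝ) : ℂ), ?_, ?_, ?_⟩
  · apply Complex.continuous_ofReal.comp
    unfold aux15L aux15a
    fun_prop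
  · have h4 : Real.sqrt ((0:ℝ)^4 + 4) = 2 := by
      rw [show ((0:ℝ)^4 + 4) = 2^2 by norm_num, Real.sqrt_sq (by norm_num)]
    have ha : aux15a 0 = 2 := by unfold aux15a; rw [h4]; norm_num
    have : aux15L 0 = -2 := by
      unfold aux15L
      rw [ha, show ((2:ℝ)^2 - 4*0^2) = 2^2 by norm_num, Real.sqrt_sq (by norm_num)]
      norm_num
    simp [this]
  · intro ξ hξ
    set a := aux15a ξ with hadef
    set L := aux15L ξ with hLdef
    have hs2 : Real.sqrt (ξ^4+4) ^ 2 = ξ^4 + 4 :=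
      Real.sq_sqrt (by positivity)
    have hsge : (2:ℝ) ≤ Real.sqrt (ξ^4+4) := by
      have h42 : Real.sqrt (4:ℝ) = 2 := by
        rw [show (4:ℝ) = 2^2 by norm_num]; exact Real.sqrt_sq (by norm_num)
      calc (2:ℝ) = Real.sqrt 4 := h42.symm
        _ ≤ _ := Real.sqrt_le_sqrt (by nlinarith [sq_nonneg (ξ^2)])
    have ha2 : (2:ℝ) ≤ a := by
      rw [hadef]; unfold aux15a; nlinarith [sq_nonneg ξ]
    have hξ1 : ξ^2 ≤ 1 := by
      nlinarith [_root_.sq_abs ξ, hξ, abs_nonneg ξ]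
    have hdisc : (0:ℝ) ≤ a^2 - 4*ξ^2 := by nlinarith
    have ht2 : Real.sqrt (a^2 - 4*ξ^2) ^ 2 = a^2 - 4*ξ^2 := Real.sq_sqrt hdisc
    have htnn : (0:ℝ) ≤ Real.sqrt (a^2 - 4*ξ^2) := Real.sqrt_nonneg _
    -- quadratic relations
    have h2 : a^2 - (ξ^2+2)*a + ξ^2 = 0 := by
      rw [hadef]; unfold aux15a; linear_combination hs2/4
    have h1 : L^2 + a*L + ξ^2 = 0 := by
      rw [hLdef]; unfold aux15L
      rw [← hadef]
      linear_combination ht2/4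
    constructor
    · have hq : L^4 + (ξ^2+2)*L^3 + 3*ξ^2*L^2 + ξ^2*(ξ^2+2)*L + ξ^4 = 0 := by
        linear_combination (L^2 + (ξ^2+2-a)*L + ξ^2) * h1 + L^2 * h2
      have := congrArg (fun x : ℝ => (x : ℂ)) hq
      push_cast at this
      convert this using 1
    · have hL : L ≤ -1 := by
        rw [hLdef]; unfold aux15L; rw [← hadef]
        nlinarith
      simpa using hL
end
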